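/- arXiv:2409.00697 — 3 statements merged into one kernel-verified Lean document; each statement's English description precedes it below -/
import Mathlib

section
/- Let G be a connected graph on n vertices. Then the Grundy packing chromatic number Γρ(G) equals the maximum k ∈ {1,…,n} for which there exists an independent set A of cardinality n in G(k) such that A ∩ V(G^k) ≠ ∅ and, for every i ∈ {1,…,k−1}, the set A ∩ V(G^i) is a maximal independent set of the subgraph of G^i induced on those vertices v^i for which no copy v^j with j < i belongs to A. -/
open SimpleGraph

/-- A packing `k`-coloring of `G`: colors in `{1,…,k}` and vertices of equal color `i`
are at distance greater than `i` (vertices in different components are unconstrained). -/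
def IsPackingColoring {V : Type*} (G : SimpleGraph V) (k : ℕ) (c : V → ℕ) : Prop :=
  (∀ v, 1 ≤ c v ∧ c v ≤ k) ∧
  ∀ u v, u ≠ v → c u = c v → G.Reachable u v → c u < G.dist u v

/-- A greedy packing `k`-coloring: a packing `k`-coloring that uses color `k` and in which
every vertex of color `i ≥ 2` has, for every `j < i`, a vertex of color `j`
at distance at most `j`. -/
def IsGreedyPackingColoring {V : Type*} (G : SimpleGraph V) (k : ℕ) (c : V → ℕ) : Prop :=
  IsPackingColoring G k c ∧ (∃ v, c v = k) ∧
  ∀ v, ∀ j, 1 ≤ j → j < c v → ∃ u, c u = j ∧ G.Reachable u v ∧ G.dist u v ≤ j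

/-- The Grundy packing chromatic number: the largest `k` admitting a greedy packing
`k`-coloring. -/
noncomputable def grundyPackingChromaticNumber {V : Type*} (G : SimpleGraph V) : ℕ :=
  sSup {k | ∃ c : V → ℕ, IsGreedyPackingColoring G k c}

/-- The packing chromatic number: the smallest `k` admitting a packing `k`-coloring. -/
noncomputable def packingChromaticNumber {V : Type*} (G : SimpleGraph V) : ℕ :=
  sInf {k | ∃ c : V → ℕ, IsPackingColoring G k c}

/-- `s` is an independent set of `G`. -/
def IsIndepFinset {V : Type*} (G : SimpleGraph V) (s : Finset V) : Prop :=
  ∀ u ∈ s, ∀ v ∈ s, ¬ G.Adj u v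

/-- `s` is a maximal independent set of `G`. -/
def IsMaxIndepFinset {V : Type*} (G : SimpleGraph V) (s : Finset V) : Prop :=
  IsIndepFinset G s ∧ ∀ t : Finset V, IsIndepFinset G t → s ⊆ t → s = t

/-- The independent domination number `i(G)`:
the minimum cardinality of a maximal independent set. -/
noncomputable def indepDomNum {V : Type*} (G : SimpleGraph V) [Fintype V] : ℕ :=
  sInf {n | ∃ s : Finset V, IsMaxIndepFinset G s ∧ s.card = n}

/-- The graph `G^ℓ`: same vertices, `u ∼ v` iff `u ≠ v` and `d_G(u,v) ≤ ℓ`. -/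
def distPow {V : Type*} (G : SimpleGraph V) (ℓ : ℕ) : SimpleGraph V where
  Adj u v := u ≠ v ∧ G.dist u v ≤ ℓ
  symm := by
    constructor
    rintro u v ⟨h1, h2⟩
    exact ⟨h1.symm, by rwa [SimpleGraph.dist_comm]⟩
  loopless := by constructor; rintro v ⟨h, _⟩; exact h rfl

/-- The graph `G(k)`: vertex set is `k` disjoint copies of `V(G)`, the copy `i : Fin k`
playing the role of `G^(i+1)`; the `k` copies of each vertex form a clique, and within the
`i`-th copy two distinct vertices are adjacent iff their distance in `G` is at most `i+1`. -/
def levelGraph {V : Type*} (G : SimpleGraph V) (k : ℕ) : SimpleGraph (V × Fin k) where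
  Adj p q := (p.1 = q.1 ∧ p.2 ≠ q.2) ∨
    (p.1 ≠ q.1 ∧ p.2 = q.2 ∧ G.dist p.1 q.1 ≤ (p.2 : ℕ) + 1)
  symm := by
    constructor
    rintro p q (⟨h1, h2⟩ | ⟨h1, h2, h3⟩)
    · exact Or.inl ⟨h1.symm, h2.symm⟩
    · refine Or.inr ⟨h1.symm, h2.symm, ?_⟩
      rw [SimpleGraph.dist_comm, ← h2]
      exact h3
  loopless := by constructor; rintro p (⟨_, h⟩ | ⟨h, _, _⟩) <;> exact h rfl

/-- `A` is a maximal independent set of the subgraph of `H` induced on `S`. -/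
def IsMaxIndepSetOn {V : Type*} (H : SimpleGraph V) (S : Set V) (A : Set V) : Prop :=
  A ⊆ S ∧ (∀ u ∈ A, ∀ v ∈ A, ¬ H.Adj u v) ∧
  ∀ B : Set V, B ⊆ S → (∀ u ∈ B, ∀ v ∈ B, ¬ H.Adj u v) → A ⊆ B → A = B

/-- The eccentricity of a vertex. -/
noncomputable def eccent {V : Type*} (G : SimpleGraph V) [Fintype V] (v : V) : ℕ :=
  Finset.univ.sup (fun u => G.dist v u)

/-- The radius of a graph. -/
noncomputable def graphRadius {V : Type*} (G : SimpleGraph V) [Fintype V] : ℕ :=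
  sInf (Set.range (eccent G))

/-- The diameter of a graph. -/
noncomputable def graphDiam {V : Type*} (G : SimpleGraph V) [Fintype V] : ℕ :=
  Finset.univ.sup (eccent G)

/-- The diametrical graph `D(G)`: `x ∼ y` iff `d_G(x,y) = diam(G)`. -/
noncomputable def diamGraph {V : Type*} (G : SimpleGraph V) [Fintype V] : SimpleGraph V where
  Adj u v := u ≠ v ∧ G.dist u v = graphDiam G
  symm := by
    constructor
    rintro u v ⟨h1, h2⟩
    exact ⟨h1.symm, by rwa [SimpleGraph.dist_comm]⟩
  loopless := by constructor; rintro v ⟨h, _⟩; exact h rfl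

/-- `Q` is a clique of the subgraph of `H` induced on `S`. -/
def IsCliqueFinsetOn {V : Type*} (H : SimpleGraph V) (S : Set V) (Q : Finset V) : Prop :=
  ↑Q ⊆ S ∧ ∀ u ∈ Q, ∀ v ∈ Q, u ≠ v → H.Adj u v

/-- `Q` is a maximal clique of the subgraph of `H` induced on `S`. -/
def IsMaxCliqueFinsetOn {V : Type*} (H : SimpleGraph V) (S : Set V) (Q : Finset V) : Prop :=
  IsCliqueFinsetOn H S Q ∧ ∀ R : Finset V, IsCliqueFinsetOn H S R → Q ⊆ R → Q = R

/-- The join `G ∨ H` of two graphs. -/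
def joinGraph {V W : Type*} (G : SimpleGraph V) (H : SimpleGraph W) :
    SimpleGraph (V ⊕ W) where
  Adj p q := match p, q with
    | .inl u, .inl v => G.Adj u v
    | .inr u, .inr v => H.Adj u v
    | .inl _, .inr _ => True
    | .inr _, .inl _ => True
  symm := by
    constructor
    rintro (u | u) (v | v) h
    · exact G.adj_symm h
    · trivial
    · trivial
    · exact H.adj_symm h
  loopless := by
    constructor
    rintro (u | u) h
    · exact G.irrefl h
    · exact H.irrefl h

/-- `K_{n,n}` minus a perfect matching: parts `{u_i}` and `{v_i}`, with `u_i ∼ v_j` iff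
`i ≠ j`. -/
def completeBipartiteMinusMatching (n : ℕ) : SimpleGraph (Fin n ⊕ Fin n) where
  Adj p q := match p, q with
    | .inl i, .inr j => i ≠ j
    | .inr i, .inl j => i ≠ j
    | _, _ => False
  symm := by constructor; rintro (i | i) (j | j) h <;> first | exact h.symm | exact h
  loopless := by constructor; rintro (i | i) h <;> exact h

/-!
A greedy packing coloring `c` with colors `1, …, k` is recorded in `G(k)` by the set
`A = {(v, c v - 1)}`, which picks one copy of every vertex. Independence of `A` in `G(k)` is
the packing condition, and the greedy condition at color `i` says that the `i`-th color class
dominates, in `G^i`, every vertex of larger color, i.e. that it is a maximal independent set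
of `G^i` among the vertices not yet colored. Conversely, an independent set of `G(k)` of
size `n` meets each clique `{v^1, …, v^k}` exactly once, so it is of this form.
-/

open Finset

theorem isMaxIndepSetOn_iff_forall_adj {V : Type*} {H : SimpleGraph V} {S A : Set V}
    (hAS : A ⊆ S) (hA : ∀ u ∈ A, ∀ v ∈ A, ¬ H.Adj u v) :
    IsMaxIndepSetOn H S A ↔ ∀ v ∈ S, v ∉ A → ∃ u ∈ A, H.Adj u v := by
  constructor
  · rintro ⟨-, -, hmax⟩ v hvS hvA
    by_contra! hno
    have hindep : ∀ x ∈ insert v A, ∀ y ∈ insert v A, ¬ H.Adj x y := by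
      rintro x (rfl | hx) y (rfl | hy)
      · exact H.irrefl
      · exact fun h => hno y hy h.symm
      · exact hno x hx
      · exact hA x hx y hy
    have hAv := hmax _ (Set.insert_subset hvS hAS) hindep (Set.subset_insert v A)
    exact hvA (hAv ▸ Set.mem_insert v A)
  · intro hdom
    refine ⟨hAS, hA, fun B hBS hB hAB => hAB.antisymm fun v hvB => ?_⟩
    by_contra hvA
    obtain ⟨u, huA, huv⟩ := hdom v (hBS hvB) hvA
    exact hB u (hAB huA) v hvB huv

section LevelGraph

variable {V : Type*} {G : SimpleGraph V} {k : ℕ}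

theorem IsPackingColoring.exists_eq_succ {c : V → ℕ} (hc : IsPackingColoring G k c) :
    ∃ lev : V → Fin k, c = fun v => (lev v : ℕ) + 1 :=
  ⟨fun v => ⟨c v - 1, by have := hc.1 v; omega⟩,
    funext fun v => by have := hc.1 v; dsimp only; omega⟩

theorem IsGreedyPackingColoring.one_le {c : V → ℕ} (hc : IsGreedyPackingColoring G k c) :
    1 ≤ k := by
  obtain ⟨v, hv⟩ := hc.2.1
  exact hv ▸ (hc.1.1 v).1

theorem IsGreedyPackingColoring.exists_eq {c : V → ℕ} (hc : IsGreedyPackingColoring G k c)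
    {j : ℕ} (hj1 : 1 ≤ j) (hjk : j ≤ k) : ∃ u, c u = j := by
  obtain ⟨v, hv⟩ := hc.2.1
  rcases hjk.eq_or_lt with rfl | hjk
  · exact ⟨v, hv⟩
  · obtain ⟨u, hu, -⟩ := hc.2.2 v j hj1 (hv ▸ hjk)
    exact ⟨u, hu⟩

theorem IsGreedyPackingColoring.le_card [Fintype V] {c : V → ℕ}
    (hc : IsGreedyPackingColoring G k c) : k ≤ Fintype.card V := by
  choose g hg using fun j : Fin k => hc.exists_eq (j := j + 1) (by omega) j.isLt
  have hg_inj : Function.Injective g := fun a b hab => Fin.ext <| by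
    have := hg a
    rw [hab, hg b] at this
    omega
  simpa using Fintype.card_le_of_injective g hg_inj

def graphFinset [Fintype V] (lev : V → Fin k) : Finset (V × Fin k) :=
  univ.map ⟨fun v => (v, lev v), fun _ _ h => congrArg Prod.fst h⟩

theorem mem_graphFinset [Fintype V] (lev : V → Fin k) (v : V) (i : Fin k) :
    (v, i) ∈ graphFinset lev ↔ lev v = i := by
  constructor
  · intro h
    obtain ⟨a, -, h⟩ := mem_map.1 h
    cases h
    rfl
  · rintro rfl
    exact mem_map_of_mem _ (mem_univ v)

theorem card_graphFinset [Fintype V] (lev : V → Fin k) :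
    (graphFinset lev).card = Fintype.card V := by
  simp [graphFinset]

theorem IsIndepFinset.injOn_fst {A : Finset (V × Fin k)}
    (hA : IsIndepFinset (levelGraph G k) A) : Set.InjOn Prod.fst (A : Set (V × Fin k)) := by
  intro p hp q hq h
  by_contra hne
  exact hA p hp q hq (Or.inl ⟨h, fun h2 => hne (Prod.ext h h2)⟩)

theorem IsIndepFinset.exists_level [Fintype V] {A : Finset (V × Fin k)}
    (hA : IsIndepFinset (levelGraph G k) A) (hcard : A.card = Fintype.card V) :
    ∃ lev : V → Fin k, ∀ v i, (v, i) ∈ A ↔ lev v = i := by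
  classical
  have himg : A.image Prod.fst = univ :=
    eq_univ_of_card _ (by rw [card_image_of_injOn hA.injOn_fst, hcard])
  have hex : ∀ v, ∃ i, (v, i) ∈ A := fun v => by
    obtain ⟨p, hp, rfl⟩ := mem_image.1 (himg ▸ mem_univ v)
    exact ⟨p.2, hp⟩
  choose lev hlev using hex
  exact ⟨lev, fun v i => ⟨fun h => congrArg Prod.snd (hA.injOn_fst (hlev v) h rfl),
    fun h => h ▸ hlev v⟩⟩

variable {A : Finset (V × Fin k)} {lev : V → Fin k}

/-- `G.dist` is `0` between different components, so the packing condition, imposed only on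
reachable pairs, matches independence in `G(k)` only for preconnected `G`. -/
theorem isPackingColoring_succ_iff_isIndepFinset (hG : G.Preconnected)
    (hA : ∀ v i, (v, i) ∈ A ↔ lev v = i) :
    IsPackingColoring G k (fun v => (lev v : ℕ) + 1) ↔ IsIndepFinset (levelGraph G k) A := by
  constructor
  · rintro ⟨-, hpack⟩ ⟨u, i⟩ hu ⟨v, j⟩ hv hadj
    rw [hA] at hu hv
    subst hu hv
    rcases hadj with ⟨rfl, hij⟩ | ⟨hne, heq, hd⟩
    · exact hij rfl
    · dsimp only at hne heq hd hpack
      have := hpack u v hne (by rw [heq]) (hG u v)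
      omega
  · intro hind
    refine ⟨fun v => ⟨by dsimp only; omega, (lev v).isLt⟩, fun u v hne heq _ => ?_⟩
    dsimp only at heq ⊢
    by_contra! hd
    exact hind _ ((hA u _).2 rfl) _ ((hA v _).2 rfl)
      (Or.inr ⟨hne, Fin.ext (Nat.add_right_cancel heq), hd⟩)

theorem exists_mem_top_iff (hA : ∀ v i, (v, i) ∈ A ↔ lev v = i) :
    (∃ p : V × Fin k, p ∈ A ∧ (p.2 : ℕ) = k - 1) ↔ ∃ v, (lev v : ℕ) + 1 = k := by
  constructor
  · rintro ⟨⟨v, i⟩, hp, hi⟩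
    rw [hA] at hp
    subst hp
    exact ⟨v, by have := (lev v).isLt; dsimp only at hi; omega⟩
  · rintro ⟨v, hv⟩
    exact ⟨(v, lev v), (hA v _).2 rfl, by dsimp only; omega⟩

theorem isMaxIndepSetOn_level_iff (hA : ∀ v i, (v, i) ∈ A ↔ lev v = i)
    (hind : IsIndepFinset (levelGraph G k) A) (i : Fin k) :
    IsMaxIndepSetOn (distPow G ((i : ℕ) + 1)) {v | ∀ j : Fin k, j < i → (v, j) ∉ A}
        {v | (v, i) ∈ A} ↔
      ∀ v, i < lev v → ∃ u, lev u = i ∧ G.dist u v ≤ i + 1 := by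
  have hS : {v | ∀ j : Fin k, j < i → (v, j) ∉ A} = {v | i ≤ lev v} := by
    ext v
    simp only [Set.mem_ofPred_eq, hA]
    exact ⟨fun h => not_lt.1 fun hlt => h _ hlt rfl, fun h j hj heq => (heq ▸ h).not_gt hj⟩
  have hT : {v | (v, i) ∈ A} = {v | lev v = i} := by
    ext v
    exact hA v i
  have hlevel :
      ∀ u ∈ {v | lev v = i}, ∀ v ∈ {v | lev v = i}, ¬ (distPow G (i + 1)).Adj u v := by
    rintro u hu v hv ⟨hne, hd⟩
    exact hind _ ((hA u _).2 rfl) _ ((hA v _).2 rfl) (Or.inr ⟨hne, hu.trans hv.symm, hu ▸ hd⟩)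
  rw [hS, hT, isMaxIndepSetOn_iff_forall_adj (S := {v | i ≤ lev v}) (fun v hv => hv.ge) hlevel]
  refine forall_congr' fun v => ⟨fun h hlt => ?_, fun h hle hne => ?_⟩
  · obtain ⟨u, hu, -, hd⟩ := h hlt.le (ne_of_gt hlt)
    exact ⟨u, hu, hd⟩
  · obtain ⟨u, hu, hd⟩ := h (lt_of_le_of_ne hle (Ne.symm hne))
    exact ⟨u, hu, ⟨fun huv => hne (huv ▸ hu), hd⟩⟩

theorem greedy_succ_iff (hG : G.Preconnected) :
    (∀ v, ∀ j, 1 ≤ j → j < (lev v : ℕ) + 1 →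
        ∃ u, (lev u : ℕ) + 1 = j ∧ G.Reachable u v ∧ G.dist u v ≤ j) ↔
      ∀ i : Fin k, (i : ℕ) + 1 ≤ k - 1 →
        ∀ v, i < lev v → ∃ u, lev u = i ∧ G.dist u v ≤ i + 1 := by
  constructor
  · intro h i _ v hiv
    rw [Fin.lt_def] at hiv
    obtain ⟨u, hu, -, hd⟩ := h v (i + 1) (by omega) (by omega)
    exact ⟨u, Fin.ext (by omega), hd⟩
  · intro h v j hj1 hjv
    have := (lev v).isLt
    obtain ⟨u, hu, hd⟩ := h ⟨j - 1, by omega⟩ (by dsimp only; omega) v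
      (by rw [Fin.lt_def]; dsimp only; omega)
    rw [Fin.ext_iff] at hu
    dsimp only at hu hd
    exact ⟨u, by omega, hG u v, by omega⟩

theorem isGreedyPackingColoring_succ_iff (hG : G.Preconnected)
    (hA : ∀ v i, (v, i) ∈ A ↔ lev v = i) :
    IsGreedyPackingColoring G k (fun v => (lev v : ℕ) + 1) ↔
      IsIndepFinset (levelGraph G k) A ∧ (∃ p : V × Fin k, p ∈ A ∧ (p.2 : ℕ) = k - 1) ∧
        ∀ i : Fin k, (i : ℕ) + 1 ≤ k - 1 →
          IsMaxIndepSetOn (distPow G ((i : ℕ) + 1))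
            {v : V | ∀ j : Fin k, j < i → (v, j) ∉ A} {v : V | (v, i) ∈ A} := by
  rw [IsGreedyPackingColoring, isPackingColoring_succ_iff_isIndepFinset hG hA,
    exists_mem_top_iff hA]
  refine and_congr_right fun hind => and_congr_right fun _ => ?_
  simp only [isMaxIndepSetOn_level_iff hA hind]
  exact greedy_succ_iff hG

theorem exists_isGreedyPackingColoring_iff [Fintype V] (hG : G.Preconnected) :
    (∃ c, IsGreedyPackingColoring G k c) ↔
      1 ≤ k ∧ k ≤ Fintype.card V ∧
        ∃ A : Finset (V × Fin k), IsIndepFinset (levelGraph G k) A ∧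
          A.card = Fintype.card V ∧
          (∃ p : V × Fin k, p ∈ A ∧ (p.2 : ℕ) = k - 1) ∧
          ∀ i : Fin k, (i : ℕ) + 1 ≤ k - 1 →
            IsMaxIndepSetOn (distPow G ((i : ℕ) + 1))
              {v : V | ∀ j : Fin k, j < i → (v, j) ∉ A}
              {v : V | (v, i) ∈ A} := by
  constructor
  · rintro ⟨c, hc⟩
    obtain ⟨lev, rfl⟩ := hc.1.exists_eq_succ
    obtain ⟨hind, htop, hmax⟩ :=
      (isGreedyPackingColoring_succ_iff hG (mem_graphFinset lev)).1 hc
    exact ⟨hc.one_le, hc.le_card, graphFinset lev, hind, card_graphFinset lev, htop, hmax⟩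
  · rintro ⟨-, -, A, hind, hcard, hrest⟩
    obtain ⟨lev, hA⟩ := hind.exists_level hcard
    exact ⟨_, (isGreedyPackingColoring_succ_iff hG hA).2 ⟨hind, hrest⟩⟩

end LevelGraph

/-- `Γρ(G)` is the maximum `k ∈ {1,…,n}` for which `G(k)` has an independent
set `A` of cardinality `n` meeting the top level `G^k` such that for every `i ∈ {1,…,k-1}`
the trace of `A` on the `i`-th level is a maximal independent set of the subgraph of `G^i`
induced on vertices whose copies on earlier levels avoid `A`. -/
theorem grundyPackingChromaticNumber_eq_max_levelGraph {V : Type*} [Fintype V]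
    (G : SimpleGraph V) (hG : G.Connected) :
    grundyPackingChromaticNumber G =
      sSup {k : ℕ | 1 ≤ k ∧ k ≤ Fintype.card V ∧
        ∃ A : Finset (V × Fin k), IsIndepFinset (levelGraph G k) A ∧
          A.card = Fintype.card V ∧
          (∃ p : V × Fin k, p ∈ A ∧ (p.2 : ℕ) = k - 1) ∧
          ∀ i : Fin k, (i : ℕ) + 1 ≤ k - 1 →
            IsMaxIndepSetOn (distPow G ((i : ℕ) + 1))
              {v : V | ∀ j : Fin k, j < i → (v, j) ∉ A}
              {v : V | (v, i) ∈ A}} := by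
  unfold grundyPackingChromaticNumber
  congr 1
  ext k
  exact exists_isGreedyPackingColoring_iff hG.preconnected
end

section
/- A graph G on n vertices satisfies Γρ(G) = n if and only if G has a universal vertex, i.e., a vertex adjacent to all other vertices. -/
open SimpleGraph

/-!
A greedy packing `k`-coloring uses every color `1, …, k`, so `Γρ(G) ≤ n`, and a greedy packing
`n`-coloring is injective. In it, every vertex other than the one of color `1` must see a vertex
of color `1` within distance `1`, which makes that vertex universal. Conversely, if `v` is
universal then all distances are at most `2`, so any bijective coloring by `1, …, n` giving `v`
color `1` is greedy: the requirement for `j = 1` is met by `v`, and for `j ≥ 2` by any vertex.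
-/

open Finset

namespace IsGreedyPackingColoring

variable {V : Type*} {G : SimpleGraph V} {k : ℕ} {c : V → ℕ}

theorem exists_apply_eq (hc : IsGreedyPackingColoring G k c) {j : ℕ} (hj : 1 ≤ j)
    (hjk : j ≤ k) : ∃ u, c u = j := by
  obtain ⟨-, ⟨w, hw⟩, hgreedy⟩ := hc
  rcases hjk.lt_or_eq with hlt | rfl
  · obtain ⟨u, hu, -⟩ := hgreedy w j hj (hw ▸ hlt)
    exact ⟨u, hu⟩
  · exact ⟨w, hw⟩

theorem Icc_subset_image [Fintype V] (hc : IsGreedyPackingColoring G k c) :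
    Icc 1 k ⊆ univ.image c := fun j hj => by
  obtain ⟨u, hu⟩ := hc.exists_apply_eq (mem_Icc.1 hj).1 (mem_Icc.1 hj).2
  exact mem_image.2 ⟨u, mem_univ u, hu⟩

theorem le_card_s4 [Fintype V] (hc : IsGreedyPackingColoring G k c) : k ≤ Fintype.card V :=
  calc k = #(Icc 1 k) := by simp
    _ ≤ #(univ.image c) := card_le_card hc.Icc_subset_image
    _ ≤ Fintype.card V := card_image_le

theorem injective_of_eq_card [Fintype V] (hc : IsGreedyPackingColoring G k c)
    (hk : k = Fintype.card V) : Function.Injective c := by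
  have hcard : #(univ.image c) = #(univ : Finset V) :=
    card_image_le.antisymm (by simpa [hk] using card_le_card hc.Icc_subset_image)
  simpa using card_image_iff.1 hcard

theorem exists_forall_adj_of_eq_card [Fintype V] (hc : IsGreedyPackingColoring G k c)
    (hk : k = Fintype.card V) : ∃ v, ∀ u, u ≠ v → G.Adj v u := by
  have hinj := hc.injective_of_eq_card hk
  have hk1 : 1 ≤ k := by
    obtain ⟨w, hw⟩ := hc.2.1
    exact hw ▸ (hc.1.1 w).1
  obtain ⟨v, hv⟩ := hc.exists_apply_eq le_rfl hk1
  refine ⟨v, fun u hu => ?_⟩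
  have hcu : 1 < c u := (hc.1.1 u).1.lt_of_ne fun h => hu (hinj (h.symm.trans hv.symm))
  obtain ⟨w, hw, hwu, hdist⟩ := hc.2.2 u 1 le_rfl hcu
  have hwv : w = v := hinj (hw.trans hv.symm)
  subst hwv
  exact dist_eq_one_iff_adj.1 (hdist.antisymm (hwu.pos_dist_of_ne hu.symm))

end IsGreedyPackingColoring

section UniversalVertex

variable {V : Type*} {G : SimpleGraph V} {v : V}

theorem reachable_of_forall_adj (hv : ∀ u, u ≠ v → G.Adj v u) (x : V) : G.Reachable v x := by
  rcases eq_or_ne x v with rfl | hx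
  · rfl
  · exact (hv x hx).reachable

theorem dist_le_one_of_forall_adj (hv : ∀ u, u ≠ v → G.Adj v u) (x : V) : G.dist v x ≤ 1 := by
  rcases eq_or_ne x v with rfl | hx
  · simp
  · exact (dist_eq_one_iff_adj.2 (hv x hx)).le

theorem dist_le_two_of_forall_adj (hv : ∀ u, u ≠ v → G.Adj v u) (x y : V) : G.dist x y ≤ 2 :=
  calc G.dist x y ≤ G.dist x v + G.dist v y :=
        (reachable_of_forall_adj hv x).symm.dist_triangle_left y
    _ ≤ 1 + 1 := by
        rw [dist_comm]
        exact add_le_add (dist_le_one_of_forall_adj hv x) (dist_le_one_of_forall_adj hv y)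

theorem isGreedyPackingColoring_of_forall_adj (hv : ∀ u, u ≠ v → G.Adj v u) {k : ℕ}
    {c : V → ℕ} (hinj : Function.Injective c) (hrange : Set.range c = Set.Icc 1 k)
    (hcv : c v = 1) : IsGreedyPackingColoring G k c := by
  have hmem : ∀ {j}, j ∈ Set.Icc 1 k → ∃ u, c u = j := fun hj => by rwa [← hrange] at hj
  have hcx : ∀ x, c x ∈ Set.Icc 1 k := fun x => hrange ▸ Set.mem_range_self x
  have hk : 1 ≤ k := hcv ▸ (hcx v).2
  refine ⟨⟨hcx, fun u w huw hc _ => absurd (hinj hc) huw⟩, hmem ⟨hk, le_rfl⟩,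
    fun x j hj hjx => ?_⟩
  obtain ⟨u, hu⟩ := hmem ⟨hj, hjx.le.trans (hcx x).2⟩
  refine ⟨u, hu, (reachable_of_forall_adj hv u).symm.trans (reachable_of_forall_adj hv x), ?_⟩
  rcases hj.lt_or_eq with hj2 | rfl
  · exact (dist_le_two_of_forall_adj hv u x).trans hj2
  · have huv : u = v := hinj (hu.trans hcv.symm)
    subst huv
    exact dist_le_one_of_forall_adj hv x

end UniversalVertex

theorem exists_injective_range_eq_Icc_card_apply_eq_one {V : Type*} [Fintype V] (v : V) :
    ∃ c : V → ℕ, Function.Injective c ∧ Set.range c = Set.Icc 1 (Fintype.card V) ∧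
      c v = 1 := by
  have hpos : 0 < Fintype.card V := Fintype.card_pos_iff.2 ⟨v⟩
  let e := (Fintype.equivFin V).trans (Equiv.swap (Fintype.equivFin V v) ⟨0, hpos⟩)
  refine ⟨fun x => e x + 1, fun x y h => e.injective (Fin.ext (by simpa using h)), ?_, by simp [e]⟩
  ext j
  simp only [Set.mem_range, Set.mem_Icc]
  constructor
  · rintro ⟨x, rfl⟩
    exact ⟨by omega, (e x).isLt⟩
  · rintro ⟨hj, hjn⟩
    exact ⟨e.symm ⟨j - 1, by omega⟩, by simp; omega⟩

section GrundyPackingChromaticNumber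

variable {V : Type*} [Fintype V] {G : SimpleGraph V}

theorem bddAbove_setOf_isGreedyPackingColoring :
    BddAbove {k | ∃ c : V → ℕ, IsGreedyPackingColoring G k c} :=
  ⟨Fintype.card V, fun _ ⟨_, hc⟩ => hc.le_card_s4⟩

theorem grundyPackingChromaticNumber_le_card : grundyPackingChromaticNumber G ≤ Fintype.card V :=
  csSup_le' fun _ ⟨_, hc⟩ => hc.le_card_s4

theorem le_grundyPackingChromaticNumber {k : ℕ} {c : V → ℕ} (hc : IsGreedyPackingColoring G k c) :
    k ≤ grundyPackingChromaticNumber G :=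
  le_csSup bddAbove_setOf_isGreedyPackingColoring ⟨c, hc⟩

theorem exists_isGreedyPackingColoring_grundyPackingChromaticNumber
    (h : 0 < grundyPackingChromaticNumber G) :
    ∃ c, IsGreedyPackingColoring G (grundyPackingChromaticNumber G) c := by
  refine Nat.sSup_mem (Set.nonempty_iff_ne_empty.2 fun hempty => ?_)
    bddAbove_setOf_isGreedyPackingColoring
  simp [grundyPackingChromaticNumber, hempty] at h

end GrundyPackingChromaticNumber

/-- A graph `G` on `n` vertices satisfies `Γρ(G) = n` iff `G` has a
universal vertex. -/
theorem grundyPackingChromaticNumber_eq_card_iff {V : Type*} [Fintype V] [Nonempty V]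
    (G : SimpleGraph V) :
    grundyPackingChromaticNumber G = Fintype.card V ↔
    ∃ v : V, ∀ u : V, u ≠ v → G.Adj v u := by
  constructor
  · intro h
    obtain ⟨c, hc⟩ := exists_isGreedyPackingColoring_grundyPackingChromaticNumber
      (h ▸ Fintype.card_pos : 0 < grundyPackingChromaticNumber G)
    exact hc.exists_forall_adj_of_eq_card h
  · rintro ⟨v, hv⟩
    obtain ⟨c, hinj, hrange, hcv⟩ := exists_injective_range_eq_Icc_card_apply_eq_one v
    exact grundyPackingChromaticNumber_le_card.antisymm
      (le_grundyPackingChromaticNumber (isGreedyPackingColoring_of_forall_adj hv hinj hrange hcv))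
end

section
/- If G is a connected graph on n vertices with diam(G) = 2, then Γρ(G) = n − i(G) + 1. -/
open SimpleGraph

/-!
In a greedy packing `k`-coloring the vertices of color `1` form a maximal independent set
(color `1` forbids adjacency, and greediness makes every other vertex adjacent to color `1`),
and each of the colors `2, …, k` occurs, so `k - 1 ≤ n - i(G)`. Conversely, if `G` is connected
of diameter at most `2`, color a minimum maximal independent set with `1` and give the remaining
`n - i(G)` vertices the distinct colors `2, …, n - i(G) + 1`: distinct vertices never share a
color `j ≥ 2`, and every vertex lies within distance `2 ≤ j` of the vertex of color `j`.
-/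

open Finset

section

variable {V : Type*} {G : SimpleGraph V}

section MaxIndep

variable {s : Finset V}

theorem IsMaxIndepFinset.exists_adj (hs : IsMaxIndepFinset G s) {v : V} (hv : v ∉ s) :
    ∃ u ∈ s, G.Adj u v := by
  classical
  by_contra! hnadj
  have hindep : IsIndepFinset G (insert v s) := by
    simp only [IsIndepFinset, forall_mem_insert]
    exact ⟨⟨G.irrefl, fun u hu huv => hnadj u hu huv.symm⟩,
      fun u hu => ⟨hnadj u hu, hs.1 u hu⟩⟩
  exact hv (hs.2 _ hindep (subset_insert v s) ▸ mem_insert_self v s)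

theorem isMaxIndepFinset_of_forall_exists_adj (hindep : IsIndepFinset G s)
    (hdom : ∀ v ∉ s, ∃ u ∈ s, G.Adj u v) : IsMaxIndepFinset G s := by
  refine ⟨hindep, fun t ht hst => hst.antisymm fun v hvt => ?_⟩
  by_contra hvs
  obtain ⟨u, hus, huv⟩ := hdom v hvs
  exact ht u (hst hus) v hvt huv

theorem IsMaxIndepFinset.nonempty [Nonempty V] (hs : IsMaxIndepFinset G s) : s.Nonempty := by
  by_contra! h
  obtain ⟨u, hu, -⟩ := hs.exists_adj (h ▸ notMem_empty (Classical.arbitrary V))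
  simp [h] at hu

theorem exists_isMaxIndepFinset_card_eq_indepDomNum [Fintype V] (G : SimpleGraph V) :
    ∃ s : Finset V, IsMaxIndepFinset G s ∧ s.card = indepDomNum G := by
  classical
  obtain ⟨s, hs, hmax⟩ := exists_max_image (univ.filter (IsIndepFinset G)) card
    ⟨∅, mem_filter.2 ⟨mem_univ _, by simp [IsIndepFinset]⟩⟩
  have hsmax : IsMaxIndepFinset G s := ⟨(mem_filter.1 hs).2,
    fun t ht hst => eq_of_subset_of_card_le hst (hmax t (mem_filter.2 ⟨mem_univ t, ht⟩))⟩
  exact Nat.sInf_mem (s := {n | ∃ s : Finset V, IsMaxIndepFinset G s ∧ s.card = n})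
    ⟨s.card, s, hsmax, rfl⟩

theorem indepDomNum_le_card [Fintype V] (hs : IsMaxIndepFinset G s) :
    indepDomNum G ≤ s.card :=
  Nat.sInf_le ⟨s, hs, rfl⟩

end MaxIndep

section UpperBound

variable {k : ℕ} {c : V → ℕ}

theorem IsGreedyPackingColoring.isMaxIndepFinset_filter_eq_one [Fintype V]
    (hc : IsGreedyPackingColoring G k c) : IsMaxIndepFinset G (univ.filter (c · = 1)) := by
  obtain ⟨⟨hrange, hpack⟩, -, hgreedy⟩ := hc
  refine isMaxIndepFinset_of_forall_exists_adj (fun u hu v hv huv => ?_) fun v hv => ?_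
  · simp only [mem_filter, mem_univ, true_and] at hu hv
    have := hpack u v huv.ne (hu.trans hv.symm) huv.reachable
    rw [hu, dist_eq_one_iff_adj.2 huv] at this
    exact lt_irrefl 1 this
  · simp only [mem_filter, mem_univ, true_and] at hv ⊢
    obtain ⟨u, hu, hreach, hdist⟩ := hgreedy v 1 le_rfl (by have := (hrange v).1; omega)
    have huv : u ≠ v := by rintro rfl; exact hv hu
    exact ⟨u, hu, dist_eq_one_iff_adj.1 (hdist.antisymm (hreach.pos_dist_of_ne huv))⟩

theorem IsGreedyPackingColoring.exists_eq_of_mem_Icc (hc : IsGreedyPackingColoring G k c)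
    {j : ℕ} (hj : j ∈ Icc 1 k) : ∃ v, c v = j := by
  obtain ⟨-, ⟨w, hw⟩, hgreedy⟩ := hc
  rw [mem_Icc] at hj
  obtain hjk | rfl := hj.2.lt_or_eq
  · obtain ⟨u, hu, -⟩ := hgreedy w j hj.1 (hw ▸ hjk)
    exact ⟨u, hu⟩
  · exact ⟨w, hw⟩

theorem IsGreedyPackingColoring.le_card_sub_indepDomNum_add_one [Fintype V]
    (hc : IsGreedyPackingColoring G k c) : k ≤ Fintype.card V - indepDomNum G + 1 := by
  classical
  have hcolors : Icc 2 k ⊆ (univ.filter (¬c · = 1)).image c := fun j hj => by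
    obtain ⟨v, rfl⟩ := hc.exists_eq_of_mem_Icc (Icc_subset_Icc_left one_le_two hj)
    have := (mem_Icc.1 hj).1
    exact mem_image_of_mem c (mem_filter.2 ⟨mem_univ v, by omega⟩)
  have hk : 1 ≤ k := by obtain ⟨⟨hrange, -⟩, ⟨w, rfl⟩, -⟩ := hc; exact (hrange w).1
  have hcard := card_filter_add_card_filter_not (s := univ) (c · = 1)
  have hT := (card_le_card hcolors).trans card_image_le
  have hS := indepDomNum_le_card hc.isMaxIndepFinset_filter_eq_one
  rw [Nat.card_Icc] at hT
  rw [card_univ] at hcard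
  omega

end UpperBound

section LowerBound

variable [Fintype V] {s : Finset V} {k : ℕ} {c : V → ℕ}

theorem dist_le_graphDiam (u v : V) : G.dist u v ≤ graphDiam G :=
  (le_sup (f := fun w => G.dist u w) (mem_univ v)).trans
    (le_sup (f := _root_.eccent G) (mem_univ u))

theorem isGreedyPackingColoring_of_range_eq_Icc (hG : G.Connected) (hdiam : graphDiam G ≤ 2)
    (hs : IsMaxIndepFinset G s) (hc1 : ∀ v, c v = 1 ↔ v ∈ s)
    (hinj : Set.InjOn c (↑s)ᶜ) (hrange : Set.range c = Set.Icc 1 k) :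
    IsGreedyPackingColoring G k c := by
  have hmem (v : V) : c v ∈ Set.Icc 1 k := hrange ▸ Set.mem_range_self v
  have hsurj {j : ℕ} (hj : j ∈ Set.Icc 1 k) : ∃ v, c v = j := by rwa [← hrange] at hj
  refine ⟨⟨hmem, fun u v huv hcuv hreach => ?_⟩, hsurj ?_, fun v j hj hjv => ?_⟩
  · by_cases hu : u ∈ s
    · have hv : v ∈ s := (hc1 v).1 (hcuv ▸ (hc1 u).2 hu)
      have hnadj : G.dist u v ≠ 1 := fun h => hs.1 u hu v hv (dist_eq_one_iff_adj.1 h)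
      have := hreach.pos_dist_of_ne huv
      rw [(hc1 u).2 hu]
      omega
    · have hv : v ∉ s := fun hv => hu ((hc1 u).1 (hcuv.trans ((hc1 v).2 hv)))
      exact absurd (hinj hu hv hcuv) huv
  · obtain ⟨w⟩ := hG.nonempty
    exact ⟨(hmem w).1.trans (hmem w).2, le_rfl⟩
  · obtain rfl | hj2 := hj.eq_or_lt
    · obtain ⟨u, hu, hadj⟩ := hs.exists_adj fun hv => by rw [(hc1 v).2 hv] at hjv; omega
      exact ⟨u, (hc1 u).2 hu, hadj.reachable, (dist_eq_one_iff_adj.2 hadj).le⟩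
    · obtain ⟨u, hu⟩ := hsurj ⟨hj, hjv.le.trans (hmem v).2⟩
      exact ⟨u, hu, hG.preconnected u v, ((dist_le_graphDiam u v).trans hdiam).trans hj2⟩

theorem exists_isGreedyPackingColoring_of_isMaxIndepFinset (hG : G.Connected)
    (hdiam : graphDiam G ≤ 2) (hs : IsMaxIndepFinset G s) :
    ∃ c, IsGreedyPackingColoring G (Fintype.card V - s.card + 1) c := by
  classical
  have := hG.nonempty
  let e := sᶜ.equivFin
  let c : V → ℕ := fun v => if h : v ∈ s then 1 else e ⟨v, mem_compl.2 h⟩ + 2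
  have hc_compl {v : V} (hv : v ∉ s) : c v = e ⟨v, mem_compl.2 hv⟩ + 2 := dif_neg hv
  have hc1 (v : V) : c v = 1 ↔ v ∈ s := by
    by_cases hv : v ∈ s <;> simp [c, hv]
  have hinj : Set.InjOn c (↑s)ᶜ := fun u hu v hv huv => by
    have := (hc_compl hu).symm.trans (huv.trans (hc_compl hv))
    have he : e ⟨u, mem_compl.2 hu⟩ = e ⟨v, mem_compl.2 hv⟩ := Fin.ext (by omega)
    exact congrArg Subtype.val (e.injective he)
  have hrange : Set.range c = Set.Icc 1 (Fintype.card V - s.card + 1) := by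
    rw [← card_compl]
    ext j
    constructor
    · rintro ⟨v, rfl⟩
      by_cases hv : v ∈ s
      · simp [c, hv]
      · have := hc_compl hv
        have := (e ⟨v, mem_compl.2 hv⟩).isLt
        exact ⟨by omega, by omega⟩
    · rintro ⟨hj1, hjk⟩
      obtain rfl | hj2 := hj1.eq_or_lt
      · obtain ⟨v, hv⟩ := hs.nonempty
        exact ⟨v, (hc1 v).2 hv⟩
      · refine ⟨e.symm ⟨j - 2, by omega⟩, ?_⟩
        rw [hc_compl (mem_compl.1 (e.symm _).2), Subtype.coe_eta, e.apply_symm_apply, Fin.val_mk]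
        omega
  exact ⟨c, isGreedyPackingColoring_of_range_eq_Icc hG hdiam hs hc1 hinj hrange⟩

end LowerBound

end

/-- If `G` is connected with `diam(G) = 2`, then `Γρ(G) = n - i(G) + 1`. -/
theorem grundyPackingChromaticNumber_of_diam_two {V : Type*} [Fintype V]
    (G : SimpleGraph V) (hG : G.Connected) (hd : graphDiam G = 2) :
    grundyPackingChromaticNumber G = Fintype.card V - indepDomNum G + 1 := by
  obtain ⟨s, hs, hcard⟩ := exists_isMaxIndepFinset_card_eq_indepDomNum G
  refine IsGreatest.csSup_eq ⟨?_, ?_⟩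
  · rw [← hcard]
    exact exists_isGreedyPackingColoring_of_isMaxIndepFinset hG hd.le hs
  · rintro k ⟨c, hc⟩
    exact hc.le_card_sub_indepDomNum_add_one
end
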